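/- Let G(x) = Σ_{i=0}^{t-1} b_i x^{q^{ni}}, σ ∈ Aut(F_{q^{nt}}) restricting to an automorphism of F_{q^n} of order n, H = G∘σ, and f = H - id. Then dim_{F_q} ker f = dim_{F_{q^n}} ker(H^n - id), where H^n is the n-fold composite. In particular, dim_{F_q} ker f = t if and only if H^n = id. -/

import Mathlib

/-!
`H` is `σ'`-semilinear over `F_{q^n}`, and `F_q` is the fixed field of `σ'`. Let
`T = ∑_{i<n} σ'^i`; by Dedekind's independence of the characters `σ'^i`, `T ≠ 0`.
An `F_q`-basis of `Fix H` stays `F_{q^n}`-independent: applying `H^j` to a relation `∑ cᵢ wᵢ = 0`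
and summing over `j` gives `∑ T(a cᵢ) wᵢ = 0` with coefficients in `F_q`, so `T(a cᵢ) = 0` for
all `a`, forcing `cᵢ = 0`. And `Fix H` spans `Fix Hⁿ`: for `v ∈ Fix Hⁿ` each
`∑_{i<n} σ'^i(c) Hⁱ v` lies in `Fix H`, so a functional `ψ` vanishing on `Fix H` satisfies
`∑_i σ'^i(c) ψ(Hⁱ v) = 0` for all `c`, and Dedekind again gives `ψ v = 0`.
-/

open Module Function Finset

theorem Finset.sum_range_succ_eq_sum_range_of_eq {M : Type*} [AddCommGroup M] {f : ℕ → M}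
    {n : ℕ} (h : f n = f 0) : ∑ i ∈ range n, f (i + 1) = ∑ i ∈ range n, f i := by
  have := (sum_range_succ' f n).symm.trans (sum_range_succ f n)
  rw [h] at this
  exact add_right_cancel this

theorem Module.finrank_eq_of_card_eq_pow {K V : Type*} [Field K] [Fintype K] [AddCommGroup V]
    [Module K V] [Fintype V] {m : ℕ} (h : Fintype.card V = Fintype.card K ^ m) :
    finrank K V = m :=
  Nat.pow_right_injective (Nat.succ_le_of_lt Fintype.one_lt_card) (card_eq_pow_finrank.symm.trans h)

namespace AlgEquiv

variable {k K : Type*} [Field k] [Field K] [Algebra k K]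

theorem mem_range_algebraMap_of_apply_eq [Finite K] (τ : K ≃ₐ[k] K)
    (hτ : orderOf τ = finrank k K) {c : K} (hc : τ c = c) : c ∈ Set.range (algebraMap k K) := by
  have htop : Subgroup.zpowers τ = ⊤ :=
    Subgroup.eq_top_of_card_eq _ (by rw [Nat.card_zpowers, hτ, IsGalois.card_aut_eq_finrank])
  have hstab : Subgroup.zpowers τ ≤ MulAction.stabilizer (K ≃ₐ[k] K) c :=
    Subgroup.zpowers_le.mpr hc
  rw [htop] at hstab
  exact (IsGalois.mem_range_algebraMap_iff_fixed c).mpr fun g => hstab (Subgroup.mem_top g)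

theorem eq_zero_of_forall_sum_pow_apply_mul_eq_zero (τ : K ≃ₐ[k] K) {d : ℕ → K}
    (h : ∀ c, ∑ i ∈ range (orderOf τ), (τ ^ i) c * d i = 0) {i : ℕ} (hi : i < orderOf τ) :
    d i = 0 := by
  let χ : Fin (orderOf τ) → (K →* K) := fun j => ((τ ^ (j : ℕ) : K ≃ₐ[k] K) : K →* K)
  have hχ : Injective χ := fun i j hij => Fin.ext <|
    pow_injOn_Iio_orderOf i.isLt j.isLt (AlgEquiv.ext fun c => by exact DFunLike.congr_fun hij c)
  have hrel : ∑ j : Fin (orderOf τ), d j • ⇑(χ j) = 0 := funext fun c => by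
    have hc := h c
    rw [← Fin.sum_univ_eq_sum_range (fun j => (τ ^ j) c * d j)] at hc
    simpa [χ, mul_comm] using hc
  exact Fintype.linearIndependent_iff.mp ((linearIndependent_monoidHom K K).comp χ hχ) _ hrel
    ⟨i, hi⟩

theorem exists_sum_pow_apply_ne_zero (τ : K ≃ₐ[k] K) (hτ : IsOfFinOrder τ) :
    ∃ x, ∑ i ∈ range (orderOf τ), (τ ^ i) x ≠ 0 := by
  by_contra! h
  exact one_ne_zero <| τ.eq_zero_of_forall_sum_pow_apply_mul_eq_zero (d := 1)
    (fun c => by simpa using h c) hτ.orderOf_pos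

theorem apply_sum_pow_apply (τ : K ≃ₐ[k] K) (x : K) :
    τ (∑ i ∈ range (orderOf τ), (τ ^ i) x) = ∑ i ∈ range (orderOf τ), (τ ^ i) x := by
  rw [map_sum]
  refine (sum_congr rfl fun i _ => ?_).trans
    (sum_range_succ_eq_sum_range_of_eq (f := fun i => (τ ^ i) x) (by simp [pow_orderOf_eq_one]))
  rw [pow_succ', mul_apply]

end AlgEquiv

section Semilinear

variable {k K V : Type*} [Field k] [Field K] [Algebra k K] [AddCommGroup V] [Module K V]

theorem isFixedPt_sum_pow_smul_iterate (τ : K ≃ₐ[k] K) (H : V →ₛₗ[(τ : K →+* K)] V) {v : V}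
    (hv : IsFixedPt H^[orderOf τ] v) (c : K) :
    IsFixedPt H (∑ i ∈ range (orderOf τ), (τ ^ i) c • H^[i] v) := by
  unfold IsFixedPt
  rw [map_sum]
  refine (sum_congr rfl fun i _ => ?_).trans
    (sum_range_succ_eq_sum_range_of_eq (f := fun i => (τ ^ i) c • H^[i] v) ?_)
  · rw [map_smulₛₗ, pow_succ', AlgEquiv.mul_apply, iterate_succ_apply']
    rfl
  · simp [pow_orderOf_eq_one, hv.eq]

theorem mem_span_isFixedPt_of_isFixedPt_iterate (τ : K ≃ₐ[k] K) (hτ : IsOfFinOrder τ)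
    (H : V →ₛₗ[(τ : K →+* K)] V) {v : V} (hv : IsFixedPt H^[orderOf τ] v) :
    v ∈ Submodule.span K {x | IsFixedPt H x} := by
  by_contra hv'
  obtain ⟨ψ, hψv, hψ⟩ := Submodule.exists_dual_map_eq_bot_of_notMem hv' inferInstance
  have hψfix : ∀ x, IsFixedPt H x → ψ x = 0 := fun x hx => by
    have hmem := Submodule.mem_map_of_mem (f := ψ)
      (Submodule.subset_span (R := K) (s := {x | IsFixedPt H x}) hx)
    rwa [hψ, Submodule.mem_bot] at hmem
  have hcoeff : ∀ c, ∑ i ∈ range (orderOf τ), (τ ^ i) c * ψ (H^[i] v) = 0 := fun c => by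
    simpa using hψfix _ (isFixedPt_sum_pow_smul_iterate τ H hv c)
  exact hψv (by simpa using τ.eq_zero_of_forall_sum_pow_apply_mul_eq_zero hcoeff hτ.orderOf_pos)

variable [Module k V]

theorem span_eq_of_isFixedPt (τ : K ≃ₐ[k] K) (hτ : IsOfFinOrder τ) (H : V →ₛₗ[(τ : K →+* K)] V)
    {W : Submodule k V} (hW : ∀ x, x ∈ W ↔ IsFixedPt H x) {U : Submodule K V}
    (hU : ∀ x, x ∈ U ↔ IsFixedPt H^[orderOf τ] x) : Submodule.span K (W : Set V) = U := by
  refine le_antisymm (Submodule.span_le.mpr fun x hx => (hU x).mpr (((hW x).mp hx).iterate _))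
    fun v hv => ?_
  rw [show (W : Set V) = {x | IsFixedPt H x} from Set.ext hW]
  exact mem_span_isFixedPt_of_isFixedPt_iterate τ hτ H ((hU v).mp hv)

variable [IsScalarTower k K V]

theorem linearIndependent_of_isFixedPt (τ : K ≃ₐ[k] K) (hτ : IsOfFinOrder τ)
    (hfix : ∀ c, τ c = c → c ∈ Set.range (algebraMap k K)) (H : V →ₛₗ[(τ : K →+* K)] V)
    {ι : Type*} [Fintype ι] {w : ι → V} (hw : LinearIndependent k w)
    (hwH : ∀ i, IsFixedPt H (w i)) : LinearIndependent K w := by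
  rw [Fintype.linearIndependent_iff] at hw ⊢
  intro c hc i
  have hτrel : ∀ c : ι → K, ∑ i, c i • w i = 0 → ∑ i, τ (c i) • w i = 0 := fun c hc => by
    simpa [map_sum, map_smulₛₗ, (hwH _).eq] using congrArg H hc
  have hpow : ∀ j (c : ι → K), ∑ i, c i • w i = 0 → ∑ i, (τ ^ j) (c i) • w i = 0 := by
    intro j
    induction j with
    | zero => simp
    | succ j ih => intro c h; simpa [pow_succ'] using hτrel _ (ih c h)
  have htr : ∀ a : K, ∑ i, (∑ j ∈ range (orderOf τ), (τ ^ j) (a * c i)) • w i = 0 := by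
    intro a
    simp_rw [sum_smul]
    rw [sum_comm]
    exact sum_eq_zero fun j _ => hpow j _ (by simp_rw [mul_smul, ← smul_sum, hc, smul_zero])
  have hzero : ∀ a : K, ∑ j ∈ range (orderOf τ), (τ ^ j) (a * c i) = 0 := by
    intro a
    choose e he using fun i => hfix _ (τ.apply_sum_pow_apply (a * c i))
    have := hw e ((sum_congr rfl fun i _ => by rw [← he i, algebraMap_smul]).trans (htr a))
    rw [← he i, this i, map_zero]
  by_contra hci
  obtain ⟨x, hx⟩ := τ.exists_sum_pow_apply_ne_zero hτ
  exact hx (by simpa [div_mul_cancel₀ x hci] using hzero (x / c i))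

theorem finrank_span_eq_finrank_of_isFixedPt (τ : K ≃ₐ[k] K) (hτ : IsOfFinOrder τ)
    (hfix : ∀ c, τ c = c → c ∈ Set.range (algebraMap k K)) (H : V →ₛₗ[(τ : K →+* K)] V)
    (W : Submodule k V) [Module.Finite k W] (hW : ∀ x, x ∈ W ↔ IsFixedPt H x) :
    finrank K (Submodule.span K (W : Set V)) = finrank k W := by
  let b := Module.finBasis k W
  have hind : LinearIndependent K (W.subtype ∘ b) :=
    linearIndependent_of_isFixedPt τ hτ hfix H (b.linearIndependent.map' W.subtype W.ker_subtype)
      fun i => (hW _).1 (b i).2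
  have hspan : Submodule.span k (Set.range (W.subtype ∘ b)) = W := by
    rw [Set.range_comp, ← Submodule.map_span, b.span_eq, Submodule.map_top, Submodule.range_subtype]
  calc finrank K (Submodule.span K (W : Set V))
      = finrank K (Submodule.span K (Set.range (W.subtype ∘ b))) := by
        rw [← Submodule.span_span_of_tower k K (Set.range _), hspan]
    _ = finrank k W := by rw [finrank_span_eq_card hind, Fintype.card_fin]

end Semilinear

theorem stmt_5 (q n t : ℕ) (Fq Fqn F : Type*) [Field Fq] [Field Fqn] [Field F]
    [Algebra Fq Fqn] [Algebra Fqn F] [Algebra Fq F] [IsScalarTower Fq Fqn F]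
    [Fintype Fq] [Fintype Fqn] [Fintype F]
    (hq : Fintype.card Fq = q) (hqn : Fintype.card Fqn = q ^ n)
    (hF : Fintype.card F = q ^ (n * t))
    (σ : F ≃ₐ[Fq] F) (σ' : Fqn ≃ₐ[Fq] Fqn) (hord : orderOf σ' = n)
    (hres : ∀ c : Fqn, σ (algebraMap Fqn F c) = algebraMap Fqn F (σ' c))
    (b : Fin t → F)
    (H : F → F) (hH : ∀ x, H x = ∑ i : Fin t, b i * σ x ^ q ^ (n * (i : ℕ)))
    (f : F →ₗ[Fq] F) (hf : ∀ x, f x = H x - x)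
    (g : F →ₗ[Fqn] F) (hg : ∀ x, g x = H^[n] x - x) :
    Module.finrank Fq (LinearMap.ker f) = Module.finrank Fqn (LinearMap.ker g) ∧
      (Module.finrank Fq (LinearMap.ker f) = t ↔ ∀ x, H^[n] x = x) := by
  have hFqn : finrank Fq Fqn = n := finrank_eq_of_card_eq_pow (by rw [hqn, hq])
  have hFt : finrank Fqn F = t := finrank_eq_of_card_eq_pow (by rw [hF, hqn, pow_mul])
  have hHf : ∀ x, H x = f x + x := fun x => by rw [hf, sub_add_cancel]
  have hsemi : ∀ (c : Fqn) (x : F), H (c • x) = σ' c • H x := fun c x => by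
    -- `q ^ (n * i) = (q ^ n) ^ i`, and `x ↦ x ^ (q ^ n) ^ i` fixes `F_{q^n}`
    simp only [hH, Algebra.smul_def, map_mul, hres, pow_mul, ← hqn, mul_pow, ← map_pow,
      FiniteField.pow_card_pow, mul_sum, mul_left_comm]
  let Hs : F →ₛₗ[(σ' : Fqn →+* Fqn)] F :=
    { toFun := H
      map_add' := fun x y => by simp only [hHf, map_add]; abel
      map_smul' := hsemi }
  have hkerf : ∀ x, x ∈ LinearMap.ker f ↔ IsFixedPt Hs x := fun x => by
    rw [LinearMap.mem_ker, hf, sub_eq_zero]; rfl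
  have hkerg : ∀ x, x ∈ LinearMap.ker g ↔ IsFixedPt Hs^[orderOf σ'] x := fun x => by
    rw [LinearMap.mem_ker, hg, sub_eq_zero, hord]; rfl
  have hσ' : IsOfFinOrder σ' := isOfFinOrder_of_finite σ'
  have hdim : finrank Fq (LinearMap.ker f) = finrank Fqn (LinearMap.ker g) := by
    rw [← span_eq_of_isFixedPt σ' hσ' Hs hkerf hkerg, finrank_span_eq_finrank_of_isFixedPt σ' hσ'
      (fun c => σ'.mem_range_algebraMap_of_apply_eq (hord.trans hFqn.symm)) Hs _ hkerf]
  refine ⟨hdim, ?_⟩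
  rw [hdim, ← hFt, ← Submodule.eq_top_iff_finrank_eq, LinearMap.ker_eq_top]
  simp only [LinearMap.ext_iff, hg, LinearMap.zero_apply, sub_eq_zero]
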